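/- For the directional mapping ξ = θ + r(v + ρθ), s = −r/(1+rρ), w = v with θ, v ∈ ℝⁿ (n ≥ 2), the absolute value of the Jacobian determinant of (θ, r, v) ↦ (ξ, s, w) equals |1 + rρ|^{n−2}. -/

import Mathlib

/-!
In the splitting `(θ) × (r, v)` the derivative of the map is block upper triangular: the
`θ`-block is `(1 + rρ) • id`, and the `(r, v)`-block is again triangular with diagonal entries
`-(1 + rρ)⁻²` and `id`. Hence the Jacobian is `(1 + rρ)ⁿ · (-(1 + rρ)⁻²)`.
-/

namespace LinearMap

variable {R M₁ M₂ : Type*} [CommRing R] [AddCommGroup M₁] [Module R M₁] [Module.Free R M₁]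
  [Module.Finite R M₁] [AddCommGroup M₂] [Module R M₂] [Module.Free R M₂] [Module.Finite R M₂]

theorem det_prodMap_add_inl_comp_comp_snd (f : Module.End R M₁) (g : M₂ →ₗ[R] M₁)
    (k : Module.End R M₂) :
    (f.prodMap k + inl R M₁ M₂ ∘ₗ g ∘ₗ snd R M₁ M₂).det = f.det * k.det := by
  classical
  let b₁ := Module.Free.chooseBasis R M₁
  let b₂ := Module.Free.chooseBasis R M₂
  have hM : toMatrix (b₁.prod b₂) (b₁.prod b₂) (f.prodMap k + inl R M₁ M₂ ∘ₗ g ∘ₗ snd R M₁ M₂) =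
      Matrix.fromBlocks (toMatrix b₁ b₁ f) (toMatrix b₂ b₁ g) 0 (toMatrix b₂ b₂ k) := by
    ext (i | i) (j | j) <;> simp [toMatrix]
  rw [← det_toMatrix (b₁.prod b₂), hM, Matrix.det_fromBlocks_zero₂₁, det_toMatrix, det_toMatrix]

variable {M : Type*} [AddCommGroup M] [Module R M] [Module.Free R M] [Module.Finite R M]

theorem det_eq_pow_finrank_mul_of_apply (L : Module.End R (M × R × M)) (a c : R) (u : M)
    (g : Module.End R M) (hL : ∀ p, L p = (a • p.1 + p.2.1 • u + g p.2.2, c * p.2.1, p.2.2)) :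
    L.det = a ^ Module.finrank R M * c := by
  have hL' : L = (a • id).prodMap ((c • id).prodMap id) +
      inl R M (R × M) ∘ₗ ((fst R R M).smulRight u + g ∘ₗ snd R R M) ∘ₗ snd R M (R × M) := by
    ext p <;> simp [hL]
  rw [hL', det_prodMap_add_inl_comp_comp_snd, det_prodMap, det_smul, det_ring, det_id]
  simp

end LinearMap

theorem hasDerivAt_neg_div_one_add_mul {ρ r : ℝ} (h : 1 + r * ρ ≠ 0) :
    HasDerivAt (fun t : ℝ => -t / (1 + t * ρ)) (-((1 + r * ρ) ^ 2)⁻¹) r := by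
  have hden : HasDerivAt (fun t : ℝ => 1 + t * ρ) ρ r := by
    simpa using ((hasDerivAt_id r).mul_const ρ).const_add 1
  refine ((hasDerivAt_id' r).neg.div hden h).congr_deriv ?_
  simp only [Pi.neg_apply]
  field_simp
  ring

variable {E : Type*} [NormedAddCommGroup E] [NormedSpace ℝ E]

noncomputable def directionalMap (ρ : ℝ) (p : E × ℝ × E) : E × ℝ × E :=
  (p.1 + p.2.1 • (p.2.2 + ρ • p.1), -p.2.1 / (1 + p.2.1 * ρ), p.2.2)

theorem fderiv_directionalMap_apply {ρ r : ℝ} (θ v : E) (h : 1 + r * ρ ≠ 0) (q : E × ℝ × E) :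
    fderiv ℝ (directionalMap ρ) (θ, r, v) q =
      ((1 + r * ρ) • q.1 + q.2.1 • (v + ρ • θ) + r • q.2.2,
        -((1 + r * ρ) ^ 2)⁻¹ * q.2.1, q.2.2) := by
  have hfst : HasFDerivAt (fun p : E × ℝ × E => p.1) (ContinuousLinearMap.fst ℝ E (ℝ × E))
      (θ, r, v) := hasFDerivAt_fst
  have hsnd : HasFDerivAt (fun p : E × ℝ × E => p.2) (ContinuousLinearMap.snd ℝ E (ℝ × E))
      (θ, r, v) := hasFDerivAt_snd
  have hr := hsnd.fst
  have hv := hsnd.snd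
  have hs : HasFDerivAt (fun p : E × ℝ × E => -p.2.1 / (1 + p.2.1 * ρ)) _ (θ, r, v) :=
    ((hasDerivAt_neg_div_one_add_mul h).comp_hasFDerivAt (θ, r, v) hr :)
  have hF : HasFDerivAt (directionalMap ρ) _ (θ, r, v) :=
    (hfst.add (hr.smul (hv.add (hfst.const_smul ρ)))).prodMk (hs.prodMk hv)
  rw [hF.fderiv]
  refine Prod.ext ?_ (by simp)
  simp only [ContinuousLinearMap.prod_apply, add_apply, smul_apply,
    ContinuousLinearMap.comp_apply, ContinuousLinearMap.coe_fst', ContinuousLinearMap.coe_snd',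
    ContinuousLinearMap.smulRight_apply, Pi.add_apply, Pi.smul_apply]
  module

/-- The Jacobian determinant of the directional mapping has absolute value
`|1 + rρ|^(n−2)`. -/
theorem stmt8 (n : ℕ) (hn : 2 ≤ n) (ρ : ℝ)
    (θ v : Fin n → ℝ) (r : ℝ) (h : 1 + r * ρ ≠ 0) :
    |(fderiv ℝ (fun p : (Fin n → ℝ) × ℝ × (Fin n → ℝ) =>
        ((p.1 + p.2.1 • (p.2.2 + ρ • p.1), (-p.2.1 / (1 + p.2.1 * ρ), p.2.2)) :
          (Fin n → ℝ) × ℝ × (Fin n → ℝ))) (θ, r, v)).det|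
      = |1 + r * ρ| ^ (n - 2) := by
  have hdet : (fderiv ℝ (directionalMap ρ) (θ, r, v)).det =
      (1 + r * ρ) ^ n * -((1 + r * ρ) ^ 2)⁻¹ := by
    have := LinearMap.det_eq_pow_finrank_mul_of_apply
      (fderiv ℝ (directionalMap ρ) (θ, r, v)).toLinearMap _ _ (v + ρ • θ) (r • LinearMap.id)
      (fderiv_directionalMap_apply θ v h)
    rwa [Module.finrank_fin_fun] at this
  change |(fderiv ℝ (directionalMap ρ) (θ, r, v)).det| = _
  rw [hdet, mul_neg, abs_neg, ← pow_sub₀ _ h hn, abs_pow]
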